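/- Let G be a group, U a subgroup, and w an element such that U · U^w · U · U^w = G, where U^w = w⁻¹Uw. If all elements of U are unipotent (i.e., U is contained in a set 𝒰 closed under conjugation), then 𝒰³ = G, i.e., every element of G is a product of three elements of 𝒰. -/
import Mathlib

/-- If `U·U^w·U·U^w = G` and `U ⊆ 𝒰` where `𝒰` is closed under conjugation, then
every element of `G` is a product of three elements of `𝒰`. -/
theorem stmt6 {G : Type*} [Group G] (U : Subgroup G) (w : G) (𝒰 : Set G)
    (hconj : ∀ g ∈ 𝒰, ∀ x : G, x⁻¹ * g * x ∈ 𝒰)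
    (hU : (U : Set G) ⊆ 𝒰)
    (hfact : ∀ g : G, ∃ a ∈ U, ∃ b ∈ U, ∃ c ∈ U, ∃ d ∈ U,
      g = a * (w⁻¹ * b * w) * c * (w⁻¹ * d * w)) :
    ∀ g : G, ∃ x ∈ 𝒰, ∃ y ∈ 𝒰, ∃ z ∈ 𝒰, g = x * y * z := by
  intro g
  obtain ⟨a, ha, b, hb, c, hc, d, hd, hg⟩ := hfact g
  refine ⟨a * w⁻¹ * b * w * a⁻¹, ?_, a * c, hU (mul_mem ha hc),
    w⁻¹ * d * w, ?_, ?_⟩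
  · have := hconj b (hU hb) (w * a⁻¹)
    simpa [mul_assoc] using this
  · have := hconj d (hU hd) w
    simpa [mul_assoc] using this
  · rw [hg]; group
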